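/- arXiv:2010.07191 — 2 statements merged into one kernel-verified Lean document; each statement's English description precedes it below -/
import Mathlib

section
/- Let r be a positive integer and let G be a graph on n vertices in which the number of non-edges (unordered pairs of distinct vertices that are not adjacent) is at most q. Then there exists a set W of vertices of G with |W| ≥ n − r − 2rq/n such that any two distinct vertices of W have at least r common neighbors in G (equivalently, are joined by at least r paths of length two). -/
open Finset

private lemma exists_bottom_set {V : Type*} [Fintype V] [DecidableEq V] (m : V → ℕ) :
    ∀ r, r ≤ Fintype.card V →
      ∃ U : Finset V, U.card = r ∧ ∀ a ∈ U, ∀ b ∉ U, m a ≤ m b := by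
  intro r
  induction r with
  | zero => exact fun _ => ⟨∅, rfl, by simp⟩
  | succ k ih =>
    intro hk
    obtain ⟨U, hc, hmin⟩ := ih (Nat.le_of_succ_le hk)
    have hne : Uᶜ.Nonempty := by
      rw [← Finset.card_pos, Finset.card_compl, hc]
      omega
    obtain ⟨u, hu, humin⟩ := Finset.exists_min_image Uᶜ m hne
    have huU : u ∉ U := by simpa using hu
    refine ⟨insert u U, by rw [Finset.card_insert_of_notMem huU, hc], ?_⟩
    intro a ha b hb
    have hbU : b ∉ U := fun h => hb (Finset.mem_insert_of_mem h)
    rcases Finset.mem_insert.mp ha with rfl | ha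
    · exact humin b (by simpa using hbU)
    · exact hmin a ha b hbU

/-- if `G` is a graph on `n` vertices with at most `q` non-edges, then there is
a set `W` of at least `n - r - 2rq/n` vertices such that any two distinct vertices of `W`
have at least `r` common neighbors in `G`. -/
theorem statement1 {V : Type*} [Fintype V] (n r q : ℕ) (hn : 1 ≤ n)
    (hV : Fintype.card V = n) (hr : 0 < r) (G : SimpleGraph V)
    (hq : Nat.card Gᶜ.edgeSet ≤ q) :
    ∃ W : Finset V, (n : ℝ) - r - 2 * r * q / n ≤ W.card ∧
      ∀ x ∈ W, ∀ y ∈ W, x ≠ y → r ≤ Nat.card {z : V // G.Adj x z ∧ G.Adj z y} := by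
  classical
  have hn0 : (0:ℝ) < n := by exact_mod_cast hn
  by_cases hrn : r ≤ n
  case neg =>
    refine ⟨∅, ?_, by simp⟩
    have h1 : (n:ℝ) ≤ r := by
      exact_mod_cast le_of_lt (not_le.mp hrn)
    have h2 : 0 ≤ 2 * (r:ℝ) * q / n := by positivity
    simp only [card_empty, Nat.cast_zero]
    linarith
  -- m v = number of non-neighbors of v
  set m : V → ℕ := fun v => Gᶜ.degree v with hm
  obtain ⟨U, hUcard, hUmin⟩ := exists_bottom_set m r (hV ▸ hrn)
  -- total sum of m is at most 2q
  have hsum : ∑ v, m v ≤ 2 * q := by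
    have h1 : ∑ v, Gᶜ.degree v = 2 * Gᶜ.edgeFinset.card :=
      SimpleGraph.sum_degrees_eq_twice_card_edges Gᶜ
    have h2 : Nat.card Gᶜ.edgeSet = Gᶜ.edgeFinset.card := by
      rw [Nat.card_eq_fintype_card, SimpleGraph.edgeFinset, Set.toFinset_card]
    calc ∑ v, m v = 2 * Gᶜ.edgeFinset.card := h1
      _ = 2 * Nat.card Gᶜ.edgeSet := by rw [h2]
      _ ≤ 2 * q := by omega
  -- averaging: n * (sum over U) ≤ r * (total sum)
  have havg : n * (∑ u ∈ U, m u) ≤ r * (∑ v, m v) := by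
    have h1 : Uᶜ.card * (∑ u ∈ U, m u) ≤ r * (∑ b ∈ Uᶜ, m b) := by
      have := Finset.sum_le_sum (s := U) (f := fun a => ∑ _b ∈ Uᶜ, m a)
        (g := fun _a => ∑ b ∈ Uᶜ, m b)
        (fun a ha => Finset.sum_le_sum (fun b hb => hUmin a ha b (by simpa using hb)))
      simpa [Finset.sum_const, Finset.mul_sum, mul_comm, hUcard] using this
    have h2 : U.card + Uᶜ.card = n := by rw [Finset.card_add_card_compl, hV]
    have h3 : ∑ v, m v = (∑ u ∈ U, m u) + (∑ b ∈ Uᶜ, m b) := by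
      rw [← Finset.sum_add_sum_compl U m]
    calc n * (∑ u ∈ U, m u) = U.card * (∑ u ∈ U, m u) + Uᶜ.card * (∑ u ∈ U, m u) := by
          rw [← add_mul, h2]
      _ ≤ r * (∑ u ∈ U, m u) + r * (∑ b ∈ Uᶜ, m b) := by
          rw [hUcard]; exact Nat.add_le_add_left h1 _
      _ = r * (∑ v, m v) := by rw [h3, mul_add]
  -- the set W
  set P : V → Prop := fun x => ∀ u ∈ U, G.Adj u x with hP
  set W : Finset V := univ.filter P with hW
  have hbad : (univ.filter fun x => ¬ P x).card ≤ r + ∑ u ∈ U, m u := by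
    have hsub : (univ.filter fun x => ¬ P x) ⊆
        U.biUnion (fun u => insert u (Gᶜ.neighborFinset u)) := by
      intro x hx
      simp only [hP, Finset.mem_filter, Finset.mem_univ, true_and, not_forall] at hx
      obtain ⟨u, huU, hadj⟩ := hx
      refine Finset.mem_biUnion.mpr ⟨u, huU, ?_⟩
      by_cases hxu : x = u
      · simp [hxu]
      · refine Finset.mem_insert_of_mem ?_
        rw [SimpleGraph.mem_neighborFinset, SimpleGraph.compl_adj]
        exact ⟨fun h => hxu h.symm, hadj⟩
    calc (univ.filter fun x => ¬ P x).card
        ≤ ∑ u ∈ U, (insert u (Gᶜ.neighborFinset u)).card :=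
          le_trans (Finset.card_le_card hsub) (Finset.card_biUnion_le)
      _ ≤ ∑ u ∈ U, (1 + m u) := by
          refine Finset.sum_le_sum (fun u _ => ?_)
          refine le_trans (Finset.card_insert_le _ _) ?_
          rw [SimpleGraph.card_neighborFinset_eq_degree]
          simp only [hm]
          omega
      _ = r + ∑ u ∈ U, m u := by rw [Finset.sum_add_distrib, Finset.sum_const, hUcard]; simp
  have hWcard : n ≤ W.card + r + ∑ u ∈ U, m u := by
    have h := Finset.card_filter_add_card_filter_not (s := univ) (p := P)
    have h' : W.card + (univ.filter fun x => ¬ P x).card = n := by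
      rw [hW]
      rw [← hV, ← Finset.card_univ]
      convert h using 2
    omega
  refine ⟨W, ?_, ?_⟩
  · -- cardinality bound
    have hS : (↑(∑ u ∈ U, m u) : ℝ) ≤ 2 * r * q / n := by
      rw [le_div_iff₀ hn0]
      have : ((n : ℕ) : ℝ) * (∑ u ∈ U, m u) ≤ (r : ℝ) * (2 * q) := by
        exact_mod_cast le_trans havg (Nat.mul_le_mul_left r hsum)
      calc (↑(∑ u ∈ U, m u) : ℝ) * n = (n : ℝ) * (∑ u ∈ U, m u) := by ring
        _ ≤ (r : ℝ) * (2 * q) := this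
        _ = 2 * r * q := by ring
    have h1 : (n : ℝ) ≤ W.card + r + (∑ u ∈ U, m u) := by exact_mod_cast hWcard
    linarith
  · -- pairwise common neighbors
    intro x hx y hy hxy
    simp only [hW, hP, Finset.mem_filter, Finset.mem_univ, true_and] at hx hy
    have hUsub : U ⊆ univ.filter (fun z => G.Adj x z ∧ G.Adj z y) := by
      intro u hu
      simp only [Finset.mem_filter, Finset.mem_univ, true_and]
      exact ⟨(hx u hu).symm, hy u hu⟩
    calc r = U.card := hUcard.symm
      _ ≤ (univ.filter (fun z => G.Adj x z ∧ G.Adj z y)).card := Finset.card_le_card hUsub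
      _ = Fintype.card {z : V // G.Adj x z ∧ G.Adj z y} := (Fintype.card_subtype _).symm
      _ = Nat.card {z : V // G.Adj x z ∧ G.Adj z y} := (Nat.card_eq_fintype_card).symm
end

section
/- For every positive integer r there exist positive constants c₁ = c₁(r) and c₂ = c₂(r) such that the following holds, where h = h(r) = binom(r+1, 2). Let H be an r-partite r-uniform hypergraph with vertex classes A_1, …, A_r, each of size n ≥ 2. Then there exist positive integers t_1, …, t_r and a subhypergraph H' of H such that (1) for every i ∈ {1,…,r} and every X ∈ C_i(H'), one has t_i ≤ d_{H'}(X) < c₁·t_i·(log n)^h, and (2) H' has at least c₂·|E(H)|·(log n)^{−h} edges. -/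
/-- `hdeg H X` is the degree of the vertex set `X` in the hypergraph `H`: the number of
edges of `H` containing `X`. -/
def hdeg {V : Type*} [DecidableEq V] (H : Finset (Finset V)) (X : Finset V) : ℕ :=
  (H.filter (fun e => X ⊆ e)).card

namespace Stmt10

variable {V : Type} [DecidableEq V] {r : ℕ}
def lnk (A : Fin r → Finset V) (i : Fin r) (e : Finset V) : Finset V :=
  (e ∩ Finset.univ.biUnion A) \ A i
variable {A : Fin r → Finset V}

lemma inter_biUnion_eq (e : Finset V) :
    e ∩ Finset.univ.biUnion A = Finset.univ.biUnion (fun j => e ∩ A j) := by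
  ext v
  simp only [Finset.mem_inter, Finset.mem_biUnion, Finset.mem_univ, true_and]
  tauto

lemma card_inter_biUnion (hdisj : ∀ i j : Fin r, i ≠ j → Disjoint (A i) (A j))
    {e : Finset V} (he : ∀ i, (e ∩ A i).card = 1) :
    (e ∩ Finset.univ.biUnion A).card = r := by
  rw [inter_biUnion_eq, Finset.card_biUnion]
  · simp [he]
  · intro j hj j' hj' hne
    exact (hdisj j j' hne).mono Finset.inter_subset_right Finset.inter_subset_right

lemma lnk_inter (hdisj : ∀ i j : Fin r, i ≠ j → Disjoint (A i) (A j))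
    {i : Fin r} {e : Finset V} {j : Fin r} (hj : j ≠ i) :
    lnk A i e ∩ A j = e ∩ A j := by
  ext v
  simp only [lnk, Finset.mem_inter, Finset.mem_sdiff, Finset.mem_biUnion, Finset.mem_univ,
    true_and]
  constructor
  · tauto
  · rintro ⟨hve, hvj⟩
    exact ⟨⟨⟨hve, ⟨j, hvj⟩⟩, fun hvi => Finset.disjoint_left.1 (hdisj j i hj) hvj hvi⟩, hvj⟩

lemma lnk_card (hdisj : ∀ i j : Fin r, i ≠ j → Disjoint (A i) (A j))
    {e : Finset V} (he : ∀ i, (e ∩ A i).card = 1) (i : Fin r) :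
    (lnk A i e).card = r - 1 := by
  have h1 : ((e ∩ Finset.univ.biUnion A) ∩ A i).card + ((e ∩ Finset.univ.biUnion A) \ A i).card
      = (e ∩ Finset.univ.biUnion A).card := Finset.card_inter_add_card_sdiff _ _
  have h2 : (e ∩ Finset.univ.biUnion A) ∩ A i = e ∩ A i := by
    ext v
    simp only [Finset.mem_inter, Finset.mem_biUnion, Finset.mem_univ, true_and]
    exact ⟨fun h => ⟨h.1.1, h.2⟩, fun h => ⟨⟨h.1, ⟨i, h.2⟩⟩, h.2⟩⟩
  have h3 := card_inter_biUnion hdisj he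
  rw [h2, he i, h3] at h1
  unfold lnk
  omega

def Clean (A : Fin r → Finset V) (i : Fin r) (X : Finset V) : Prop :=
  X.card = r - 1 ∧ ∀ j, j ≠ i → (X ∩ A j).card = 1

def Ci (A : Fin r → Finset V) (i : Fin r) (G : Finset (Finset V)) : Finset (Finset V) :=
  G.image (lnk A i)

lemma lnk_subset (A : Fin r → Finset V) (i : Fin r) (e : Finset V) : lnk A i e ⊆ e :=
  fun v hv => (Finset.mem_inter.1 (Finset.mem_sdiff.1 hv).1).1

-- paste from a.lean the clean lemmas (assume available): we re-state minimal versions here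
lemma clean_biUnion (hdisj : ∀ i j : Fin r, i ≠ j → Disjoint (A i) (A j))
    {i : Fin r} {X : Finset V} (hX : Clean A i X) :
    (Finset.univ.erase i).biUnion (fun j => X ∩ A j) = X := by
  refine Finset.eq_of_subset_of_card_le (fun v hv => ?_) ?_
  · rcases Finset.mem_biUnion.1 hv with ⟨j, _, hj⟩
    exact (Finset.mem_inter.1 hj).1
  · rw [Finset.card_biUnion]
    · have h1 : ∀ j ∈ Finset.univ.erase i, (X ∩ A j).card = 1 := fun j hj =>
        hX.2 j (Finset.ne_of_mem_erase hj)
      rw [Finset.sum_congr rfl h1, Finset.sum_const, smul_eq_mul, mul_one,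
        Finset.card_erase_of_mem (Finset.mem_univ i), Finset.card_univ, Fintype.card_fin, hX.1]
    · intro j hj j' hj' hne
      exact (hdisj j j' hne).mono Finset.inter_subset_right Finset.inter_subset_right

lemma clean_parts (hdisj : ∀ i j : Fin r, i ≠ j → Disjoint (A i) (A j))
    {i : Fin r} {X : Finset V} (hX : Clean A i X) :
    X ⊆ Finset.univ.biUnion A ∧ X ∩ A i = ∅ := by
  have h := clean_biUnion hdisj hX
  constructor
  · intro v hv
    rw [← h] at hv
    rcases Finset.mem_biUnion.1 hv with ⟨j, _, hj⟩
    exact Finset.mem_biUnion.2 ⟨j, Finset.mem_univ _, (Finset.mem_inter.1 hj).2⟩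
  · rw [Finset.eq_empty_iff_forall_notMem]
    intro v hv
    have hvX := (Finset.mem_inter.1 hv).1
    have hvA := (Finset.mem_inter.1 hv).2
    rw [← h] at hvX
    rcases Finset.mem_biUnion.1 hvX with ⟨j, hj, hj2⟩
    exact Finset.disjoint_left.1 (hdisj j i (Finset.ne_of_mem_erase hj))
      (Finset.mem_inter.1 hj2).2 hvA

lemma lnk_clean (hdisj : ∀ i j : Fin r, i ≠ j → Disjoint (A i) (A j))
    {e : Finset V} (he : ∀ i, (e ∩ A i).card = 1) (i : Fin r) :
    Clean A i (lnk A i e) :=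
  ⟨lnk_card hdisj he i, fun j hj => by rw [lnk_inter hdisj hj]; exact he j⟩

lemma subset_iff_lnk_eq (hdisj : ∀ i j : Fin r, i ≠ j → Disjoint (A i) (A j))
    {e : Finset V} (he : ∀ i, (e ∩ A i).card = 1) {i : Fin r} {X : Finset V}
    (hX : Clean A i X) : X ⊆ e ↔ lnk A i e = X := by
  constructor
  · intro hXe
    refine (Finset.eq_of_subset_of_card_le (fun v hv => ?_) ?_).symm
    · refine Finset.mem_sdiff.2 ⟨Finset.mem_inter.2 ⟨hXe hv, (clean_parts hdisj hX).1 hv⟩, ?_⟩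
      intro hvi
      have hmem : v ∈ X ∩ A i := Finset.mem_inter.2 ⟨hv, hvi⟩
      rw [(clean_parts hdisj hX).2] at hmem
      exact absurd hmem (Finset.notMem_empty v)
    · rw [lnk_card hdisj he i, hX.1]
  · rintro rfl
    exact lnk_subset A i e

variable {H : Finset (Finset V)}

lemma hdeg_eq_fiber (hdisj : ∀ i j : Fin r, i ≠ j → Disjoint (A i) (A j))
    (hpart : ∀ e ∈ H, ∀ i, (e ∩ A i).card = 1) {G : Finset (Finset V)} (hG : G ⊆ H)
    {i : Fin r} {X : Finset V} (hX : Clean A i X) :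
    hdeg G X = (G.filter (fun e => lnk A i e = X)).card := by
  unfold hdeg
  congr 1
  apply Finset.filter_congr
  intro e he
  exact subset_iff_lnk_eq hdisj (hpart e (hG he)) hX

lemma sum_hdeg (hdisj : ∀ i j : Fin r, i ≠ j → Disjoint (A i) (A j))
    (hpart : ∀ e ∈ H, ∀ i, (e ∩ A i).card = 1) {G : Finset (Finset V)} (hG : G ⊆ H)
    (i : Fin r) : ∑ X ∈ Ci A i G, hdeg G X = G.card := by
  rw [Finset.card_eq_sum_card_fiberwise
    (fun e he => Finset.mem_image_of_mem (lnk A i) he : ∀ e ∈ G, lnk A i e ∈ Ci A i G)]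
  apply Finset.sum_congr rfl
  intro X hX
  rcases Finset.mem_image.1 hX with ⟨e, he, rfl⟩
  exact hdeg_eq_fiber hdisj hpart hG (lnk_clean hdisj (hpart e (hG he)) i)

lemma hdeg_lnk_pos {G : Finset (Finset V)} {e : Finset V} (he : e ∈ G) (i : Fin r) :
    0 < hdeg G (lnk A i e) :=
  Finset.card_pos.2 ⟨e, Finset.mem_filter.2 ⟨he, lnk_subset A i e⟩⟩

lemma mem_Ci_iff (hdisj : ∀ i j : Fin r, i ≠ j → Disjoint (A i) (A j))
    (hpart : ∀ e ∈ H, ∀ i, (e ∩ A i).card = 1) {G : Finset (Finset V)} (hG : G ⊆ H)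
    {i : Fin r} {X : Finset V} (hX : Clean A i X) :
    X ∈ Ci A i G ↔ 0 < hdeg G X := by
  constructor
  · rintro h
    rcases Finset.mem_image.1 h with ⟨e, he, rfl⟩
    exact hdeg_lnk_pos he i
  · intro h
    rcases Finset.card_pos.1 h with ⟨e, he⟩
    rw [Finset.mem_filter] at he
    exact Finset.mem_image.2 ⟨e, he.1,
      (subset_iff_lnk_eq hdisj (hpart e (hG he.1)) hX).1 he.2⟩

lemma hdeg_filter_lnk (hdisj : ∀ i j : Fin r, i ≠ j → Disjoint (A i) (A j))
    (hpart : ∀ e ∈ H, ∀ i, (e ∩ A i).card = 1) {G : Finset (Finset V)} (hG : G ⊆ H)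
    (i : Fin r) (p : Finset V → Prop) [DecidablePred p] {e : Finset V}
    (he : e ∈ G.filter (fun e => p (lnk A i e))) :
    hdeg (G.filter (fun e => p (lnk A i e))) (lnk A i e) = hdeg G (lnk A i e) := by
  have heG : e ∈ G := (Finset.mem_filter.1 he).1
  have hcl : Clean A i (lnk A i e) := lnk_clean hdisj (hpart e (hG heG)) i
  rw [hdeg_eq_fiber hdisj hpart ((Finset.filter_subset _ _).trans hG) hcl,
    hdeg_eq_fiber hdisj hpart hG hcl]
  congr 1
  ext e'
  simp only [Finset.mem_filter]
  constructor
  · tauto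
  · rintro ⟨hg, hl⟩
    exact ⟨⟨hg, by rw [hl]; exact (Finset.mem_filter.1 he).2⟩, hl⟩

lemma hdeg_mono {G' G : Finset (Finset V)} (h : G' ⊆ G) (X : Finset V) :
    hdeg G' X ≤ hdeg G X :=
  Finset.card_le_card (Finset.filter_subset_filter _ h)

lemma Ci_mono (A : Fin r → Finset V) (i : Fin r) {G' G : Finset (Finset V)} (h : G' ⊆ G) :
    Ci A i G' ⊆ Ci A i G :=
  Finset.image_subset_image h

lemma Ci_card_le {n : ℕ} (hdisj : ∀ i j : Fin r, i ≠ j → Disjoint (A i) (A j))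
    {H : Finset (Finset V)} (hpart : ∀ e ∈ H, ∀ i, (e ∩ A i).card = 1)
    (hA : ∀ j, (A j).card = n) {G : Finset (Finset V)} (hG : G ⊆ H) (i : Fin r) :
    (Ci A i G).card ≤ (n + 1) ^ r := by
  have hclean : ∀ X ∈ Ci A i G, Clean A i X := by
    intro X hX
    rcases Finset.mem_image.1 hX with ⟨e, he, rfl⟩
    exact lnk_clean hdisj (hpart e (hG he)) i
  have hle : (Ci A i G).card ≤
      (Fintype.piFinset (fun j : Fin r =>
        insert ∅ ((A j).image (fun v => ({v} : Finset V))))).card := by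
    apply Finset.card_le_card_of_injOn (fun X => fun j => X ∩ A j)
    · intro X hX
      have hcl := hclean X hX
      rw [Finset.mem_coe, Fintype.mem_piFinset]
      intro j
      beta_reduce
      by_cases hj : j = i
      · subst hj
        rw [(clean_parts hdisj hcl).2]
        exact Finset.mem_insert_self _ _
      · rcases Finset.card_eq_one.1 (hcl.2 j hj) with ⟨v, hv⟩
        rw [hv]
        refine Finset.mem_insert_of_mem (Finset.mem_image.2 ⟨v, ?_, rfl⟩)
        have hmem : v ∈ X ∩ A j := hv ▸ Finset.mem_singleton_self v
        exact (Finset.mem_inter.1 hmem).2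
    · intro X hX Y hY hxy
      have hclX := hclean X hX
      have hclY := hclean Y hY
      rw [← clean_biUnion hdisj hclX, ← clean_biUnion hdisj hclY]
      exact Finset.biUnion_congr rfl (fun j _ => congrFun hxy j)
  refine hle.trans ?_
  rw [Fintype.card_piFinset]
  calc ∏ j : Fin r, (insert ∅ ((A j).image (fun v => ({v} : Finset V)))).card
      ≤ ∏ _j : Fin r, (n + 1) := by
        apply Finset.prod_le_prod'
        intro j _
        refine (Finset.card_insert_le _ _).trans ?_
        have := (Finset.card_image_le (s := A j) (f := fun v => ({v} : Finset V))).trans_eq (hA j)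
        omega
    _ = (n + 1) ^ r := by simp

lemma selection {n : ℕ} (hn : 2 ≤ n) (hr : 0 < r)
    (hdisj : ∀ i j : Fin r, i ≠ j → Disjoint (A i) (A j))
    (hpart : ∀ e ∈ H, ∀ i, (e ∩ A i).card = 1)
    (hA : ∀ j, (A j).card = n)
    {G : Finset (Finset V)} (hG : G ⊆ H) (hne : G.Nonempty) (i : Fin r) :
    ∃ G₁ : Finset (Finset V), G₁ ⊆ G ∧ G₁.Nonempty ∧
      (G.card : ℝ) ≤ ((8 * r * (Nat.log 2 n + 1) : ℕ) : ℝ) * G₁.card ∧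
      ∃ D : ℕ, 0 < D ∧ ∀ e ∈ G₁, D ≤ hdeg G₁ (lnk A i e) ∧ hdeg G₁ (lnk A i e) < 2 * D := by
  classical
  set m : ℕ := Nat.log 2 n + 1 with hm
  set N : ℕ := (n + 1) ^ r with hN
  have hNpos : 0 < N := by positivity
  have hN2 : N ≤ 2 ^ (m * r) := by
    have h1 : n + 1 ≤ 2 ^ m := Nat.lt_pow_succ_log_self (by norm_num) n
    calc N = (n + 1) ^ r := rfl
      _ ≤ (2 ^ m) ^ r := Nat.pow_le_pow_left h1 r
      _ = 2 ^ (m * r) := by rw [← pow_mul]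
  set d : Finset V → ℕ := fun e => hdeg G (lnk A i e) with hd
  set Ghi : Finset (Finset V) := G.filter (fun e => G.card ≤ d e * (2 * N)) with hGhi
  set S : Finset (Finset V) := G.filter (fun e => ¬ G.card ≤ d e * (2 * N)) with hS
  have hsplit : Ghi.card + S.card = G.card := Finset.card_filter_add_card_filter_not _
  have hGpos : 0 < G.card := Finset.card_pos.2 hne
  -- bound on S
  have hSbound : (S.card : ℝ) ≤ (G.card : ℝ) / 2 := by
    have hSH : S ⊆ H := (Finset.filter_subset _ _).trans hG
    have hsum := sum_hdeg hdisj hpart hSH i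
    have hterm : ∀ X ∈ Ci A i S, (hdeg S X : ℝ) ≤ (G.card : ℝ) / (2 * N) := by
      intro X hX
      rcases Finset.mem_image.1 hX with ⟨e, he, rfl⟩
      have he2 := Finset.mem_filter.1 he
      have hlt : d e * (2 * N) < G.card := by omega
      have h1 : hdeg S (lnk A i e) ≤ d e :=
        hdeg_mono (Finset.filter_subset _ _) _
      have h2 : (d e : ℝ) * (2 * N) ≤ (G.card : ℝ) := by exact_mod_cast hlt.le
      rw [le_div_iff₀ (by positivity)]
      calc (hdeg S (lnk A i e) : ℝ) * (2 * N) ≤ (d e : ℝ) * (2 * N) := by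
            have : (hdeg S (lnk A i e) : ℝ) ≤ (d e : ℝ) := by exact_mod_cast h1
            nlinarith [this, (by positivity : (0:ℝ) < 2 * (N:ℝ))]
        _ ≤ (G.card : ℝ) := h2
    have hcard : ((Ci A i S).card : ℝ) ≤ (N : ℝ) := by
      exact_mod_cast Ci_card_le hdisj hpart hA hSH i
    calc (S.card : ℝ) = ∑ X ∈ Ci A i S, (hdeg S X : ℝ) := by
          rw [← Nat.cast_sum, hsum]
      _ ≤ (Ci A i S).card * ((G.card : ℝ) / (2 * N)) := by
          apply Finset.sum_le_card_nsmul _ _ _ hterm |>.trans_eq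
          simp [nsmul_eq_mul]
      _ ≤ (N : ℝ) * ((G.card : ℝ) / (2 * N)) := by
          apply mul_le_mul_of_nonneg_right hcard
          positivity
      _ = (G.card : ℝ) / 2 := by
          field_simp
  have hGhiBig : (G.card : ℝ) / 2 ≤ (Ghi.card : ℝ) := by
    have : (Ghi.card : ℝ) + S.card = G.card := by exact_mod_cast hsplit
    linarith
  -- dyadic classes
  set κ : Finset V → ℕ := fun e => Nat.log 2 (d e) with hκ
  set kmax : ℕ := Nat.log 2 G.card with hkmax
  set I : Finset ℕ := Finset.Icc (kmax - (m * r + 1)) kmax with hI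
  have hmemI : ∀ e ∈ Ghi, κ e ∈ I := by
    intro e he
    have he2 := Finset.mem_filter.1 he
    have hde : 0 < d e := hdeg_lnk_pos he2.1 i
    have hup : κ e ≤ kmax := Nat.log_mono_right (Finset.card_filter_le _ _)
    have h1 : 2 ^ kmax ≤ G.card := Nat.pow_log_le_self 2 (by omega)
    have h3 : d e < 2 ^ (κ e + 1) := Nat.lt_pow_succ_log_self (by norm_num) _
    have h4 : 2 ^ kmax < 2 ^ (κ e + m * r + 2) := by
      calc 2 ^ kmax ≤ G.card := h1
        _ ≤ d e * (2 * N) := he2.2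
        _ < 2 ^ (κ e + 1) * (2 * N) := by
            apply Nat.mul_lt_mul_of_lt_of_le h3 le_rfl
            omega
        _ ≤ 2 ^ (κ e + 1) * (2 * 2 ^ (m * r)) := by
            apply Nat.mul_le_mul_left
            omega
        _ = 2 ^ (κ e + m * r + 2) := by ring
    have h5 : kmax < κ e + m * r + 2 := by
      exact (Nat.pow_lt_pow_iff_right (by norm_num)).1 h4
    rw [hI, Finset.mem_Icc]
    omega
  have hIne : I.Nonempty := ⟨kmax, Finset.mem_Icc.2 ⟨Nat.sub_le _ _, le_rfl⟩⟩
  obtain ⟨k, hkI, hkbest⟩ := Finset.exists_max_image I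
    (fun k => (G.filter (fun e => κ e = k)).card) hIne
  set G₁ : Finset (Finset V) := G.filter (fun e => κ e = k) with hG₁
  have hcover : Ghi.card ≤ I.card * G₁.card := by
    have hsub : Ghi ⊆ I.biUnion (fun k' => G.filter (fun e => κ e = k')) := by
      intro e he
      exact Finset.mem_biUnion.2 ⟨κ e, hmemI e he,
        Finset.mem_filter.2 ⟨(Finset.mem_filter.1 he).1, rfl⟩⟩
    calc Ghi.card ≤ (I.biUnion (fun k' => G.filter (fun e => κ e = k'))).card :=
          Finset.card_le_card hsub
      _ ≤ ∑ k' ∈ I, (G.filter (fun e => κ e = k')).card := Finset.card_biUnion_le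
      _ ≤ I.card * G₁.card := by
          apply Finset.sum_le_card_nsmul
          intro k' hk'
          exact hkbest k' hk'
  have hIcard : I.card ≤ m * r + 2 := by
    rw [hI, Nat.card_Icc]
    omega
  have hmain : (G.card : ℝ) ≤ ((8 * r * m : ℕ) : ℝ) * G₁.card := by
    have h1 : Ghi.card ≤ (m * r + 2) * G₁.card :=
      hcover.trans (Nat.mul_le_mul_right _ hIcard)
    have h2 : 2 * ((m * r + 2) * G₁.card) ≤ (8 * r * m) * G₁.card := by
      have hm1 : 1 ≤ m := by omega
      have hr1 : 1 ≤ r := hr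
      have hrm : 1 * 1 ≤ m * r := Nat.mul_le_mul hm1 hr1
      have hfac : 2 * (m * r + 2) ≤ 8 * r * m := by nlinarith
      calc 2 * ((m * r + 2) * G₁.card) = (2 * (m * r + 2)) * G₁.card := by ring
        _ ≤ (8 * r * m) * G₁.card := Nat.mul_le_mul_right _ hfac
    have h3 : (Ghi.card : ℝ) ≤ ((m * r + 2) * G₁.card : ℕ) := by exact_mod_cast h1
    have h4 : ((2 * ((m * r + 2) * G₁.card) : ℕ) : ℝ) ≤ ((8 * r * m) * G₁.card : ℕ) := by
      exact_mod_cast h2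
    push_cast at h3 h4 ⊢
    linarith
  have hG₁ne : G₁.Nonempty := by
    rw [← Finset.card_pos]
    rcases Nat.eq_zero_or_pos G₁.card with h0 | h
    · exfalso
      rw [h0] at hmain
      have h5 : (0:ℝ) < G.card := by exact_mod_cast hGpos
      push_cast at hmain
      linarith
    · exact h
  refine ⟨G₁, Finset.filter_subset _ _, hG₁ne, hmain, 2 ^ k, by positivity, ?_⟩
  intro e he
  have heG : e ∈ G := (Finset.mem_filter.1 he).1
  have hde : 0 < d e := hdeg_lnk_pos heG i
  have hkd : Nat.log 2 (d e) = k := (Finset.mem_filter.1 he).2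
  have hinv : hdeg G₁ (lnk A i e) = d e := by
    have := hdeg_filter_lnk hdisj hpart hG i (fun X => Nat.log 2 (hdeg G X) = k) (e := e) ?_
    · exact this
    · exact he
  rw [hinv]
  constructor
  · rw [← hkd]
    exact Nat.pow_log_le_self 2 (by omega)
  · have := Nat.lt_pow_succ_log_self (b := 2) (by norm_num) (d e)
    rw [hkd] at this
    calc d e < 2 ^ (k + 1) := this
      _ = 2 * 2 ^ k := by ring

lemma chain {n : ℕ} (hn : 2 ≤ n) (hr : 0 < r)
    (hdisj : ∀ i j : Fin r, i ≠ j → Disjoint (A i) (A j))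
    (hpart : ∀ e ∈ H, ∀ i, (e ∩ A i).card = 1)
    (hA : ∀ j, (A j).card = n) (hHne : H.Nonempty) :
    ∀ q : ℕ, q ≤ r → ∃ G : Finset (Finset V), G ⊆ H ∧ G.Nonempty ∧
      (H.card : ℝ) ≤ (((8 * r * (Nat.log 2 n + 1) : ℕ) : ℝ)) ^ q * G.card ∧
      ∀ i : Fin r, (i : ℕ) < q → ∃ D : ℕ, 0 < D ∧
        (∀ X, Clean A i X → 0 < hdeg G X → hdeg G X < 2 * D) ∧
        ((Ci A i G).card : ℝ) * D ≤ (((8 * r * (Nat.log 2 n + 1) : ℕ) : ℝ)) ^ q * G.card := by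
  set M : ℕ := 8 * r * (Nat.log 2 n + 1) with hM
  have hM1 : (1 : ℝ) ≤ (M : ℝ) := by
    have : 8 ≤ M := by
      have : 1 ≤ r := hr
      calc 8 = 8 * 1 * 1 := by ring
        _ ≤ 8 * r * (Nat.log 2 n + 1) := by
            apply Nat.mul_le_mul (Nat.mul_le_mul_left 8 this)
            omega
    exact_mod_cast Nat.one_le_iff_ne_zero.2 (by omega) |>.trans this
  intro q
  induction q with
  | zero =>
    intro _
    exact ⟨H, subset_rfl, hHne, by simp, fun i hi => absurd hi (Nat.not_lt_zero _)⟩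
  | succ q ih =>
    intro hq
    obtain ⟨G, hGH, hGne, hcount, hinv⟩ := ih (Nat.le_of_succ_le hq)
    have hqr : q < r := hq
    obtain ⟨G₁, hsub, hne₁, hpig, D, hD, hdeg₁⟩ :=
      selection hn hr hdisj hpart hA hGH hGne ⟨q, hqr⟩
    have hMpow : (0:ℝ) ≤ (M:ℝ) ^ q := by positivity
    have hstep : (H.card : ℝ) ≤ ((M : ℝ)) ^ (q + 1) * G₁.card := by
      calc (H.card : ℝ) ≤ (M : ℝ) ^ q * G.card := hcount
        _ ≤ (M : ℝ) ^ q * ((M : ℝ) * G₁.card) := by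
            apply mul_le_mul_of_nonneg_left hpig hMpow
        _ = (M : ℝ) ^ (q + 1) * G₁.card := by ring
    refine ⟨G₁, hsub.trans hGH, hne₁, hstep, ?_⟩
    intro i hi
    by_cases hiq : (i : ℕ) = q
    · have hieq : i = ⟨q, hqr⟩ := Fin.ext hiq
      subst hieq
      refine ⟨D, hD, ?_, ?_⟩
      · intro X hX hpos
        have hXmem : X ∈ Ci A ⟨q, hqr⟩ G₁ :=
          (mem_Ci_iff hdisj hpart (hsub.trans hGH) hX).2 hpos
        rcases Finset.mem_image.1 hXmem with ⟨e, he, rfl⟩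
        exact (hdeg₁ e he).2
      · have hsum := sum_hdeg hdisj hpart (hsub.trans hGH) ⟨q, hqr⟩
        have hlow : (Ci A ⟨q, hqr⟩ G₁).card * D ≤ G₁.card := by
          rw [← hsum]
          have := Finset.card_nsmul_le_sum (Ci A ⟨q, hqr⟩ G₁) (fun X => hdeg G₁ X) D ?_
          · simpa [smul_eq_mul] using this
          · intro X hX
            rcases Finset.mem_image.1 hX with ⟨e, he, rfl⟩
            exact (hdeg₁ e he).1
        have hcast : ((Ci A ⟨q, hqr⟩ G₁).card : ℝ) * D ≤ (G₁.card : ℝ) := by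
          exact_mod_cast hlow
        calc ((Ci A ⟨q, hqr⟩ G₁).card : ℝ) * D ≤ (G₁.card : ℝ) := hcast
          _ ≤ (M : ℝ) ^ (q + 1) * G₁.card := by
              have hp : (1:ℝ) ≤ (M:ℝ) ^ (q+1) := one_le_pow₀ hM1
              nlinarith [Nat.cast_nonneg (α := ℝ) G₁.card]
    · have hi' : (i : ℕ) < q := lt_of_le_of_ne (Nat.lt_succ_iff.1 hi) hiq
      obtain ⟨D', hD', hup, hbud⟩ := hinv i hi'
      refine ⟨D', hD', ?_, ?_⟩
      · intro X hX hpos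
        exact lt_of_le_of_lt (hdeg_mono hsub X)
          (hup X hX (lt_of_lt_of_le hpos (hdeg_mono hsub X)))
      · have h1 : ((Ci A i G₁).card : ℝ) ≤ ((Ci A i G).card : ℝ) := by
          exact_mod_cast Finset.card_le_card (Ci_mono A i hsub)
        calc ((Ci A i G₁).card : ℝ) * D' ≤ ((Ci A i G).card : ℝ) * D' := by
              apply mul_le_mul_of_nonneg_right h1 (Nat.cast_nonneg _)
          _ ≤ (M : ℝ) ^ q * G.card := hbud
          _ ≤ (M : ℝ) ^ q * ((M : ℝ) * G₁.card) := mul_le_mul_of_nonneg_left hpig hMpow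
          _ = (M : ℝ) ^ (q + 1) * G₁.card := by ring

lemma cleaning (hdisj : ∀ i j : Fin r, i ≠ j → Disjoint (A i) (A j))
    (hpart : ∀ e ∈ H, ∀ i, (e ∩ A i).card = 1) (s : Fin r → ℕ) :
    ∀ (c : ℕ) (G : Finset (Finset V)), G ⊆ H → G.card ≤ c →
      ∃ G', G' ⊆ G ∧
        (∀ i X, Clean A i X → 0 < hdeg G' X → s i ≤ hdeg G' X) ∧
        G.card ≤ G'.card + ∑ i : Fin r, (s i - 1) * (Ci A i G).card := by
  intro c
  induction c with
  | zero =>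
    intro G hGH hc
    have hG0 : G = ∅ := Finset.card_eq_zero.1 (Nat.le_zero.1 hc)
    subst hG0
    refine ⟨∅, subset_rfl, ?_, by simp⟩
    intro i X _ hpos
    simp [hdeg] at hpos
  | succ c ih =>
    intro G hGH hc
    by_cases hgood : ∀ i X, Clean A i X → 0 < hdeg G X → s i ≤ hdeg G X
    · exact ⟨G, subset_rfl, hgood, Nat.le_add_right _ _⟩
    · push_neg at hgood
      obtain ⟨i, X, hX, hpos, hlt⟩ := hgood
      set G₁ : Finset (Finset V) := G.filter (fun e => ¬ X ⊆ e) with hG₁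
      have hcard : hdeg G X + G₁.card = G.card := by
        rw [hdeg, hG₁]
        exact Finset.card_filter_add_card_filter_not _
      have hG₁le : G₁.card ≤ c := by omega
      obtain ⟨G', hsubG', hmin, hcount⟩ := ih G₁ ((Finset.filter_subset _ _).trans hGH) hG₁le
      refine ⟨G', hsubG'.trans (Finset.filter_subset _ _), hmin, ?_⟩
      have hXG : X ∈ Ci A i G := (mem_Ci_iff hdisj hpart hGH hX).2 hpos
      have hXnot : X ∉ Ci A i G₁ := by
        intro hmem
        rcases Finset.mem_image.1 hmem with ⟨e, he, heq⟩
        have : ¬ X ⊆ e := (Finset.mem_filter.1 he).2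
        exact this (heq ▸ lnk_subset A i e)
      have hclt : (Ci A i G₁).card + 1 ≤ (Ci A i G).card := by
        have hss : Ci A i G₁ ⊂ Ci A i G :=
          (Finset.ssubset_iff_of_subset (Ci_mono A i (Finset.filter_subset _ _))).2
            ⟨X, hXG, hXnot⟩
        exact Finset.card_lt_card hss
      have hsum : ∑ j : Fin r, (s j - 1) * (Ci A j G₁).card + (s i - 1)
          ≤ ∑ j : Fin r, (s j - 1) * (Ci A j G).card := by
        rw [← Finset.add_sum_erase Finset.univ _ (Finset.mem_univ i),
          ← Finset.add_sum_erase Finset.univ (fun j => (s j - 1) * (Ci A j G).card)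
            (Finset.mem_univ i)]
        have hterm : (s i - 1) * (Ci A i G₁).card + (s i - 1) ≤ (s i - 1) * (Ci A i G).card := by
          calc (s i - 1) * (Ci A i G₁).card + (s i - 1)
              = (s i - 1) * ((Ci A i G₁).card + 1) := by ring
            _ ≤ (s i - 1) * (Ci A i G).card := Nat.mul_le_mul_left _ hclt
        have hrest : ∑ j ∈ Finset.univ.erase i, (s j - 1) * (Ci A j G₁).card
            ≤ ∑ j ∈ Finset.univ.erase i, (s j - 1) * (Ci A j G).card := by
          apply Finset.sum_le_sum
          intro j _
          exact Nat.mul_le_mul_left _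
            (Finset.card_le_card (Ci_mono A j (Finset.filter_subset _ _)))
        omega
      have hdle : hdeg G X ≤ s i - 1 := by omega
      omega

end Stmt10

open Stmt10 in
/-- for every `r` there are constants `c₁, c₂ > 0` such that, with
`h = C(r+1, 2)`, every `r`-partite `r`-uniform hypergraph `H` with vertex classes
`A 0, …, A (r-1)` of size `n ≥ 2` has a subhypergraph `H'` and positive integers
`t 0, …, t (r-1)` such that every `X ∈ C_i(H')` satisfies
`t i ≤ d_{H'}(X) < c₁·(t i)·(log n)^h`, and `|E(H')| ≥ c₂·|E(H)|·(log n)^{-h}`. -/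
theorem statement10 (r : ℕ) (hr : 0 < r) :
    ∃ c₁ c₂ : ℝ, 0 < c₁ ∧ 0 < c₂ ∧
      ∀ (n : ℕ), 2 ≤ n → ∀ (V : Type) [Fintype V] [DecidableEq V],
      ∀ (A : Fin r → Finset V) (H : Finset (Finset V)),
        (∀ i, (A i).card = n) →
        (∀ i j, i ≠ j → Disjoint (A i) (A j)) →
        (∀ e ∈ H, ∀ i, (e ∩ A i).card = 1) →
        ∃ (t : Fin r → ℕ) (H' : Finset (Finset V)), (∀ i, 0 < t i) ∧ H' ⊆ H ∧
          (∀ (i : Fin r) (X : Finset V), X.card = r - 1 →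
            (∀ j, j ≠ i → (X ∩ A j).card = 1) → 0 < hdeg H' X →
            t i ≤ hdeg H' X ∧
              (hdeg H' X : ℝ) < c₁ * t i * Real.log n ^ (r + 1).choose 2) ∧
          c₂ * H.card / Real.log n ^ (r + 1).choose 2 ≤ (H'.card : ℝ) := by
  classical
  have hlog2 : (0:ℝ) < Real.log 2 := Real.log_pos (by norm_num)
  set h' : ℕ := (r + 1).choose 2 with hh'
  have hrh : r ≤ h' := by
    rw [hh', Nat.choose_two_right]
    simp only [Nat.add_sub_cancel]
    have h2 : r * 2 ≤ (r + 1) * r := by nlinarith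
    exact (Nat.le_div_iff_mul_le (by norm_num)).2 h2
  set β : ℝ := 16 * r / Real.log 2 with hβ
  have hβpos : 0 < β := by
    apply div_pos _ hlog2
    positivity
  set c₁ : ℝ := 4 * r * β ^ r / (Real.log 2) ^ (h' - r) with hc₁
  set c₂ : ℝ := (Real.log 2) ^ (h' - r) / (2 * β ^ r) with hc₂
  have hc₁pos : 0 < c₁ := by rw [hc₁]; positivity
  have hc₂pos : 0 < c₂ := by rw [hc₂]; positivity
  refine ⟨c₁, c₂, hc₁pos, hc₂pos, ?_⟩
  intro n hn V _ _ A H hA hdisj hpart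
  have hlogn : Real.log 2 ≤ Real.log n := by
    apply Real.log_le_log (by norm_num)
    exact_mod_cast hn
  have hlognpos : 0 < Real.log n := lt_of_lt_of_le hlog2 hlogn
  have hPpos : 0 < Real.log n ^ h' := by positivity
  by_cases hHne : H.Nonempty
  swap
  · rw [Finset.not_nonempty_iff_eq_empty] at hHne
    subst hHne
    refine ⟨fun _ => 1, ∅, fun _ => one_pos, Finset.empty_subset _, ?_, ?_⟩
    · intro i X _ _ hpos
      simp [hdeg] at hpos
    · simp
  · set m : ℕ := Nat.log 2 n + 1 with hm
    set M : ℕ := 8 * r * m with hM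
    have hmpos : 0 < m := by omega
    have hMpos : 0 < M := by
      rw [hM]; positivity
    obtain ⟨G, hGH, hGne, hGcount, hGinv⟩ := chain hn hr hdisj hpart hA hHne r le_rfl
    choose D hDpos hDup hDbud using fun i : Fin r => hGinv i i.isLt
    set L : ℕ := 4 * r * M ^ r with hL
    have hLpos : 0 < L := by rw [hL]; positivity
    set s : Fin r → ℕ := fun i => 2 * D i / L + 1 with hs
    obtain ⟨G', hG'sub, hG'min, hG'cnt⟩ := cleaning hdisj hpart s G.card G hGH le_rfl
    -- real estimates
    have hmR : (m:ℝ) ≤ 2 * Real.log n / Real.log 2 := by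
      have hp : ((2:ℕ):ℝ) ^ (Nat.log 2 n) ≤ (n:ℝ) := by
        exact_mod_cast Nat.pow_log_le_self 2 (by omega)
      have h1 : (Nat.log 2 n : ℝ) * Real.log 2 ≤ Real.log n := by
        calc (Nat.log 2 n : ℝ) * Real.log 2 = Real.log ((2:ℝ) ^ (Nat.log 2 n)) := by
              rw [Real.log_pow]
          _ ≤ Real.log n := by
              apply Real.log_le_log (by positivity)
              exact_mod_cast hp
      have h2 : (Nat.log 2 n : ℝ) ≤ Real.log n / Real.log 2 :=
        (le_div_iff₀ hlog2).2 h1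
      have h3 : (1:ℝ) ≤ Real.log n / Real.log 2 := (one_le_div hlog2).2 hlogn
      have : (m:ℝ) = (Nat.log 2 n : ℝ) + 1 := by rw [hm]; push_cast; ring
      rw [this]
      have : 2 * Real.log n / Real.log 2 = Real.log n / Real.log 2 + Real.log n / Real.log 2 := by
        ring
      rw [this]
      linarith
    have hMR : (M:ℝ) ≤ β * Real.log n := by
      have h1 : (M:ℝ) = 8 * r * (m:ℝ) := by rw [hM]; push_cast; ring
      rw [h1, hβ]
      calc 8 * (r:ℝ) * (m:ℝ) ≤ 8 * r * (2 * Real.log n / Real.log 2) := by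
            apply mul_le_mul_of_nonneg_left hmR (by positivity)
        _ = 16 * r / Real.log 2 * Real.log n := by field_simp; ring
    have hsplitpow : Real.log n ^ h' = Real.log n ^ (h' - r) * Real.log n ^ r := by
      rw [← pow_add]
      congr 1
      omega
    have hpowle : (Real.log 2) ^ (h' - r) ≤ (Real.log n) ^ (h' - r) :=
      pow_le_pow_left₀ hlog2.le hlogn _
    have hMpow : (M:ℝ) ^ r ≤ β ^ r * Real.log n ^ r := by
      calc (M:ℝ) ^ r ≤ (β * Real.log n) ^ r := by
            apply pow_le_pow_left₀ (Nat.cast_nonneg _) hMR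
        _ = β ^ r * Real.log n ^ r := mul_pow _ _ _
    have hI : (L:ℝ) ≤ c₁ * Real.log n ^ h' := by
      have hone : (1:ℝ) ≤ Real.log n ^ (h' - r) / Real.log 2 ^ (h' - r) :=
        (one_le_div (by positivity)).2 hpowle
      calc (L:ℝ) = 4 * r * (M:ℝ) ^ r := by rw [hL]; push_cast; ring
        _ ≤ 4 * r * (β ^ r * Real.log n ^ r) := by
            apply mul_le_mul_of_nonneg_left hMpow (by positivity)
        _ ≤ 4 * r * (β ^ r * Real.log n ^ r) *
              (Real.log n ^ (h' - r) / Real.log 2 ^ (h' - r)) := by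
            apply le_mul_of_one_le_right (by positivity) hone
        _ = c₁ * Real.log n ^ h' := by
            rw [hsplitpow, hc₁]
            field_simp
    have hII : c₂ * (2 * (M:ℝ) ^ r) ≤ Real.log n ^ h' := by
      have hdivle : (M:ℝ) ^ r / β ^ r ≤ Real.log n ^ r := by
        rw [div_le_iff₀ (by positivity)]
        calc (M:ℝ) ^ r ≤ β ^ r * Real.log n ^ r := hMpow
          _ = Real.log n ^ r * β ^ r := by ring
      calc c₂ * (2 * (M:ℝ) ^ r) = (Real.log 2) ^ (h' - r) * ((M:ℝ) ^ r / β ^ r) := by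
            rw [hc₂]; field_simp
        _ ≤ (Real.log 2) ^ (h' - r) * Real.log n ^ r := by
            apply mul_le_mul_of_nonneg_left hdivle (by positivity)
        _ ≤ (Real.log n) ^ (h' - r) * Real.log n ^ r := by
            apply mul_le_mul_of_nonneg_right hpowle (by positivity)
        _ = Real.log n ^ h' := hsplitpow.symm
    -- budget estimate
    have hbud : ∀ i : Fin r, ((s i - 1 : ℕ):ℝ) * ((Ci A i G).card : ℝ)
        ≤ (G.card:ℝ) / (2 * r) := by
      intro i
      have hs1 : (s i - 1 : ℕ) = 2 * D i / L := by rw [hs]; simp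
      have hc1 : ((s i - 1 : ℕ):ℝ) ≤ 2 * (D i : ℝ) / (L : ℝ) := by
        rw [hs1]
        calc ((2 * D i / L : ℕ):ℝ) ≤ ((2 * D i : ℕ):ℝ) / (L:ℝ) := Nat.cast_div_le
          _ = 2 * (D i : ℝ) / (L:ℝ) := by push_cast; ring
      have hLR : (L:ℝ) = 4 * r * (M:ℝ) ^ r := by rw [hL]; push_cast; ring
      calc ((s i - 1 : ℕ):ℝ) * ((Ci A i G).card : ℝ)
          ≤ (2 * (D i : ℝ) / (L:ℝ)) * ((Ci A i G).card : ℝ) := by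
            apply mul_le_mul_of_nonneg_right hc1 (Nat.cast_nonneg _)
        _ = (2 / (L:ℝ)) * (((Ci A i G).card : ℝ) * (D i : ℝ)) := by ring
        _ ≤ (2 / (L:ℝ)) * ((M:ℝ) ^ r * G.card) := by
            apply mul_le_mul_of_nonneg_left (hDbud i) (by positivity)
        _ = (G.card:ℝ) / (2 * r) := by
            rw [hLR]
            have hMne : ((M:ℝ) ^ r) ≠ 0 := by positivity
            have hrne : (r:ℝ) ≠ 0 := by exact_mod_cast hr.ne'
            field_simp
            ring
    have hGG' : (G.card : ℝ) ≤ 2 * G'.card := by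
      have hcnt : (G.card:ℝ) ≤ (G'.card : ℝ) +
          ∑ i : Fin r, ((s i - 1 : ℕ):ℝ) * ((Ci A i G).card : ℝ) := by
        have := hG'cnt
        push_cast
        exact_mod_cast this
      have hsumle : ∑ i : Fin r, ((s i - 1 : ℕ):ℝ) * ((Ci A i G).card : ℝ)
          ≤ (G.card:ℝ) / 2 := by
        calc ∑ i : Fin r, ((s i - 1 : ℕ):ℝ) * ((Ci A i G).card : ℝ)
            ≤ (Finset.univ : Finset (Fin r)).card • ((G.card:ℝ) / (2 * r)) :=
              Finset.sum_le_card_nsmul _ _ _ (fun i _ => hbud i)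
          _ = (r:ℝ) * ((G.card:ℝ) / (2 * r)) := by
              rw [Finset.card_univ, Fintype.card_fin]
              simp [nsmul_eq_mul]
          _ = (G.card:ℝ) / 2 := by
              have hrne : (r:ℝ) ≠ 0 := by exact_mod_cast hr.ne'
              field_simp
      linarith
    refine ⟨s, G', fun i => Nat.succ_pos _, hG'sub.trans hGH, ?_, ?_⟩
    · intro i X hXcard hXint hpos
      have hX : Clean A i X := ⟨hXcard, hXint⟩
      refine ⟨hG'min i X hX hpos, ?_⟩
      have hmono := hdeg_mono hG'sub X
      have h1 : hdeg G' X < 2 * D i :=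
        lt_of_le_of_lt hmono (hDup i X hX (lt_of_lt_of_le hpos hmono))
      have h2 : 2 * D i < L * s i := by
        calc 2 * D i = L * (2 * D i / L) + 2 * D i % L := (Nat.div_add_mod _ _).symm
          _ < L * (2 * D i / L) + L := Nat.add_lt_add_left (Nat.mod_lt _ hLpos) _
          _ = L * s i := (Nat.mul_succ L _).symm
      have h3 : hdeg G' X < L * s i := h1.trans h2
      have h4 : (hdeg G' X : ℝ) < (L:ℝ) * (s i : ℝ) := by exact_mod_cast h3
      calc (hdeg G' X : ℝ) < (L:ℝ) * (s i : ℝ) := h4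
        _ ≤ (c₁ * Real.log n ^ h') * (s i : ℝ) := by
            apply mul_le_mul_of_nonneg_right hI (Nat.cast_nonneg _)
        _ = c₁ * (s i : ℝ) * Real.log n ^ h' := by ring
    · rw [div_le_iff₀ hPpos]
      have hHc : (H.card:ℝ) ≤ (M:ℝ) ^ r * (2 * G'.card) := by
        calc (H.card:ℝ) ≤ (M:ℝ) ^ r * G.card := hGcount
          _ ≤ (M:ℝ) ^ r * (2 * G'.card) := by
              apply mul_le_mul_of_nonneg_left hGG' (by positivity)
      calc c₂ * (H.card:ℝ) ≤ c₂ * ((M:ℝ) ^ r * (2 * G'.card)) := by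
            apply mul_le_mul_of_nonneg_left hHc hc₂pos.le
        _ = (c₂ * (2 * (M:ℝ) ^ r)) * G'.card := by ring
        _ ≤ Real.log n ^ h' * G'.card := by
            apply mul_le_mul_of_nonneg_right hII (Nat.cast_nonneg _)
        _ = (G'.card:ℝ) * Real.log n ^ h' := by ring
end
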